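/- arXiv:1202.6180 — 4 statements merged into one kernel-verified Lean document; each statement's English description precedes it below -/
import Mathlib

section
/- Let X be a set, let α be an ordinal equipped with its order topology, and let (a_β)_{β<α} be a strictly increasing family in 2^{P(X)} (i.e., β < γ implies a_β ⊊ a_γ), with Ω = {a_β : β < α} carrying the subspace topology from 2^{P(X)}. Then the order isomorphism h : α → Ω, h(β) = a_β, is a homeomorphism if and only if for every limit ordinal β < α one has a_β = ⋃_{γ<β} a_γ. -/
/-- The Cantor-cube topology on `Set (Set X)` (identifying `𝒫(𝒫(X))` with `2^{𝒫(X)}`):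
the product topology, whose subbasic open sets are
`A⁺ = {x | A ∈ x}` and `A⁻ = {x | A ∉ x}` for `A ⊆ X`. -/
def cantorTop (X : Type*) : TopologicalSpace (Set (Set X)) :=
  TopologicalSpace.generateFrom
    ({U | ∃ A : Set X, U = {x : Set (Set X) | A ∈ x}} ∪
     {U | ∃ A : Set X, U = {x : Set (Set X) | A ∉ x}})

open scoped Topology

/-!
For `A ⊆ X` the set `U = {β | A ∈ a β}` is an upper set of the well-order, hence closed. It is
open iff every limit `β ∈ U` already has some `γ < β` in `U`, which is exactly the limit condition;
so the limit condition is continuity of `a`. Conversely, strict monotonicity alone makes every ray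
of the order topology open in `Ω`: if `d` covers `c` and `A ∈ a d \ a c`, then
`Ioi c = {β | A ∈ a β}` and `Iic c = {β | A ∉ a β}`, and `Iio c` is a union of such `Iic c'`.
-/

open Set Order Topology TopologicalSpace

attribute [local instance] cantorTop

section CantorCube

variable {X Z : Type*} [TopologicalSpace Z]

theorem isOpen_setOf_mem_cantorTop (A : Set X) : IsOpen {x : Set (Set X) | A ∈ x} :=
  isOpen_generateFrom_of_mem (.inl ⟨A, rfl⟩)

theorem isOpen_setOf_notMem_cantorTop (A : Set X) : IsOpen {x : Set (Set X) | A ∉ x} :=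
  isOpen_generateFrom_of_mem (.inr ⟨A, rfl⟩)

theorem continuous_cantorTop_iff_isClopen {f : Z → Set (Set X)} :
    Continuous f ↔ ∀ A, IsClopen {z | A ∈ f z} := by
  refine ⟨fun hf A => ⟨?_, (isOpen_setOf_mem_cantorTop A).preimage hf⟩,
    fun h => continuous_generateFrom_iff.2 ?_⟩
  · exact isOpen_compl_iff.1 ((isOpen_setOf_notMem_cantorTop A).preimage hf)
  · rintro s (⟨A, rfl⟩ | ⟨A, rfl⟩)
    exacts [(h A).isOpen, (h A).compl.isOpen]

end CantorCube

section OrderTopology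

variable {ι : Type*} [LinearOrder ι] [TopologicalSpace ι] [OrderTopology ι]

theorem isOpen_Ici_of_not_isSuccLimit {b : ι} (hb : ¬IsSuccLimit b) : IsOpen (Ici b) := by
  rcases not_isSuccLimit_iff.1 hb with hmin | hpre
  · have : Ici b = univ := eq_univ_of_forall fun x => (le_total b x).elim id fun hxb => hmin hxb
    exact this ▸ isOpen_univ
  · obtain ⟨c, hcb⟩ := not_isSuccPrelimit_iff.1 hpre
    exact hcb.Ioi_eq ▸ isOpen_Ioi

theorem IsOpen.exists_lt_mem_of_isSuccLimit {U : Set ι} {β : ι} (hU : IsOpen U) (hβU : β ∈ U)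
    (hβ : IsSuccLimit β) : ∃ γ < β, γ ∈ U := by
  obtain ⟨l, hlβ, hlU⟩ := exists_Ioc_subset_of_mem_nhds (hU.mem_nhds hβU)
    (not_isMin_iff.1 hβ.not_isMin)
  obtain ⟨γ, hlγ, hγβ⟩ := (not_covBy_iff hlβ).1 (hβ.isSuccPrelimit l)
  exact ⟨γ, hγβ, hlU ⟨hlγ, hγβ.le⟩⟩

end OrderTopology

section StrictMono

variable {ι X : Type*} [LinearOrder ι] [IsStronglyAtomic ι] {a : ι → Set (Set X)}

theorem StrictMono.exists_setOf_mem_eq_Ioi (ha : StrictMono a) {b c : ι} (hcb : c < b) :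
    ∃ A, {β | A ∈ a β} = Ioi c := by
  obtain ⟨d, hcd, -⟩ := exists_covBy_le_of_lt hcb
  obtain ⟨A, hAd, hAc⟩ := exists_of_ssubset (ha hcd.lt)
  refine ⟨A, Subset.antisymm (fun β hβ => ?_) fun β hβ => ha.monotone ?_ hAd⟩
  · exact lt_of_not_ge fun hβc => hAc (ha.monotone hβc hβ)
  · exact hcd.Ioi_eq.subset hβ

variable [TopologicalSpace ι] [OrderTopology ι]

theorem StrictMono.induced_cantorTop_le (ha : StrictMono a) :
    induced a (cantorTop X) ≤ ‹TopologicalSpace ι› := by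
  rw [OrderTopology.topology_eq_generate_intervals (α := ι), Preorder.topology]
  refine le_generateFrom ?_
  rintro _ ⟨c, rfl | rfl⟩
  · by_cases hc : IsMax c
    · simp [hc.Ioi_eq]
    · obtain ⟨b, hcb⟩ := not_isMax_iff.1 hc
      obtain ⟨A, hA⟩ := ha.exists_setOf_mem_eq_Ioi hcb
      exact hA ▸ isOpen_induced (isOpen_setOf_mem_cantorTop A)
  · have hIio : Iio c = ⋃ d ∈ Iio c, Iic d := by
      ext β
      simp only [mem_Iio, mem_iUnion, mem_Iic, exists_prop]
      exact ⟨fun h => ⟨β, h, le_rfl⟩, fun ⟨d, hdc, hβd⟩ => hβd.trans_lt hdc⟩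
    rw [hIio]
    refine @isOpen_biUnion _ _ (induced a _) _ _ fun d hdc => ?_
    obtain ⟨A, hA⟩ := ha.exists_setOf_mem_eq_Ioi hdc
    have : {β | A ∉ a β} = Iic d := by rw [← compl_Ioi, ← hA]; rfl
    exact this ▸ isOpen_induced (isOpen_setOf_notMem_cantorTop A)

end StrictMono

section WellOrder

variable {ι X : Type*} [LinearOrder ι] [WellFoundedLT ι] [TopologicalSpace ι] [OrderTopology ι]
  {a : ι → Set (Set X)}

theorem Monotone.continuous_cantorTop_iff (ha : Monotone a) :
    Continuous a ↔ ∀ β, IsSuccLimit β → a β = ⋃ γ < β, a γ := by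
  refine ⟨fun hc β hβ => ?_, fun hlim => continuous_cantorTop_iff_isClopen.2 fun A => ?_⟩
  · refine Subset.antisymm (fun A hA => ?_) (iUnion₂_subset fun γ hγ => ha hγ.le)
    obtain ⟨γ, hγβ, hγ⟩ :=
      (continuous_cantorTop_iff_isClopen.1 hc A).isOpen.exists_lt_mem_of_isSuccLimit hA hβ
    exact mem_iUnion₂.2 ⟨γ, hγβ, hγ⟩
  have hup : IsUpperSet {β | A ∈ a β} := fun β γ h hβ => ha h hβ
  refine ⟨hup.isClosed, isOpen_iff_mem_nhds.2 fun β hβ => ?_⟩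
  by_cases hl : IsSuccLimit β
  · obtain ⟨γ, hγβ, hγ⟩ := mem_iUnion₂.1 (hlim β hl ▸ hβ : A ∈ ⋃ γ < β, a γ)
    exact Filter.mem_of_superset (isOpen_Ioi.mem_nhds hγβ) fun δ hδ => hup hδ.le hγ
  · exact Filter.mem_of_superset ((isOpen_Ici_of_not_isSuccLimit hl).mem_nhds le_rfl)
      fun δ hδ => hup hδ hβ

theorem StrictMono.isEmbedding_cantorTop_iff (ha : StrictMono a) :
    IsEmbedding a ↔ ∀ β, IsSuccLimit β → a β = ⋃ γ < β, a γ := by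
  rw [← ha.monotone.continuous_cantorTop_iff]
  exact ⟨IsEmbedding.continuous, fun hc =>
    ⟨⟨le_antisymm (continuous_iff_le_induced.1 hc) ha.induced_cantorTop_le⟩, ha.injective⟩⟩

end WellOrder

theorem stmt5 {X : Type*} (α : Ordinal)
    (a : ↥(Set.Iio α) → Set (Set X))
    (hmono : ∀ β γ : ↥(Set.Iio α), (β : Ordinal) < (γ : Ordinal) → a β ⊂ a γ) :
    @IsHomeomorph ↥(Set.Iio α) ↥(Set.range a)
        (Preorder.topology ↥(Set.Iio α))
        (TopologicalSpace.induced Subtype.val (cantorTop X))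
        (fun β => ⟨a β, Set.mem_range_self β⟩) ↔
      ∀ β : ↥(Set.Iio α), Order.IsSuccLimit (β : Ordinal) →
        a β = ⋃ γ : ↥(Set.Iio α), ⋃ (_ : (γ : Ordinal) < (β : Ordinal)), a γ := by
  let _ : TopologicalSpace (Iio α) := Preorder.topology _
  have : OrderTopology (Iio α) := ⟨rfl⟩
  have ha : StrictMono a := hmono
  calc IsHomeomorph (rangeFactorization a) ↔ IsEmbedding a :=
        ⟨fun h => IsEmbedding.subtypeVal.comp h.isEmbedding,
          fun h => h.toHomeomorph.isHomeomorph⟩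
    _ ↔ ∀ β, IsSuccLimit β → a β = ⋃ γ < β, a γ := ha.isEmbedding_cantorTop_iff
    _ ↔ _ := forall_congr' fun β =>
        imp_congr_left ((principalSegIio α).isSuccLimit_apply_iff (a := β)).symm
end

section
/- Let X be an infinite set. Then Top(X), the set of all topologies on X viewed as a subset of 2^{P(X)}, is not an F_σ subset of 2^{P(X)}; that is, Top(X) is not a countable union of closed subsets of 2^{P(X)}. -/
/-- `τ` is a topology on `X`: it contains `∅` and `X` and is closed under
pairwise intersections and arbitrary unions. -/
def IsTopologyOn {X : Type*} (τ : Set (Set X)) : Prop :=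
  ∅ ∈ τ ∧ Set.univ ∈ τ ∧ (∀ a ∈ τ, ∀ b ∈ τ, a ∩ b ∈ τ) ∧ ∀ S ⊆ τ, ⋃₀ S ∈ τ

open Set Filter Topology

theorem IsGδ.ne_iUnion_isClosed {Y : Type*} [TopologicalSpace Y] [BaireSpace Y] [Nonempty Y]
    {s : Set Y} (hs : IsGδ s) (hd : Dense s) (hdc : Dense sᶜ) {C : ℕ → Set Y}
    (hC : ∀ n, IsClosed (C n)) : s ≠ ⋃ n, C n := by
  rintro rfl
  have hcompl : IsGδ (⋃ n, C n)ᶜ := by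
    rw [compl_iUnion]
    exact .iInter_of_isOpen fun n => (hC n).isOpen_compl
  obtain ⟨y, hy, hyc⟩ := (hd.inter_of_Gδ hs hcompl hdc).nonempty
  exact hyc hy

lemma tendsto_truncate {α : Type*} [TopologicalSpace α] (z : ℕ → ℕ → α) (c : α) :
    Tendsto (fun n k m => if k < n ∧ m < n then z k m else c) atTop (𝓝 z) :=
  tendsto_pi_nhds.2 fun k => tendsto_pi_nhds.2 fun m =>
    tendsto_const_nhds.congr' <| eventually_atTop.2
      ⟨max k m + 1, fun n hn => (if_pos (by omega)).symm⟩

lemma dense_of_forall_truncate_mem {α : Type*} [TopologicalSpace α] {s : Set (ℕ → ℕ → α)}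
    (c : α) (h : ∀ (z : ℕ → ℕ → α) (n : ℕ), (fun k m => if k < n ∧ m < n then z k m else c) ∈ s) :
    Dense s :=
  fun z => mem_closure_of_tendsto (tendsto_truncate z c) (.of_forall (h z))

lemma isGδ_setOf_forall_exists_eq_true :
    IsGδ {x : ℕ → ℕ → Bool | ∀ k, ∃ m, x k m = true} := by
  simp only [ofPred_forall, ofPred_exists]
  exact .iInter_of_isOpen fun k => isOpen_iUnion fun m =>
    (isOpen_discrete {true}).preimage (continuous_apply_apply (ρ := fun _ _ => Bool) k m)

lemma dense_setOf_forall_exists_eq_true :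
    Dense {x : ℕ → ℕ → Bool | ∀ k, ∃ m, x k m = true} :=
  dense_of_forall_truncate_mem true fun _ n k => ⟨n, if_neg (by omega)⟩

lemma dense_compl_setOf_forall_exists_eq_true :
    Dense {x : ℕ → ℕ → Bool | ∀ k, ∃ m, x k m = true}ᶜ :=
  dense_of_forall_truncate_mem false fun _ n h => by simpa using h n

theorem setOf_forall_exists_eq_true_ne_iUnion_isClosed {C : ℕ → Set (ℕ → ℕ → Bool)}
    (hC : ∀ n, IsClosed (C n)) : {x : ℕ → ℕ → Bool | ∀ k, ∃ m, x k m = true} ≠ ⋃ n, C n :=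
  isGδ_setOf_forall_exists_eq_true.ne_iUnion_isClosed dense_setOf_forall_exists_eq_true
    dense_compl_setOf_forall_exists_eq_true hC

lemma continuous_cantorTop_iff {X Y : Type*} [TopologicalSpace Y] {f : Y → Set (Set X)} :
    Continuous[_, cantorTop X] f ↔ ∀ A : Set X, IsClopen {y | A ∈ f y} := by
  rw [cantorTop, continuous_generateFrom_iff]
  refine ⟨fun h A => ⟨?_, h _ (.inl ⟨A, rfl⟩)⟩, ?_⟩
  · exact isOpen_compl_iff.1 (h _ (.inr ⟨A, rfl⟩))
  · rintro h _ (⟨A, rfl⟩ | ⟨A, rfl⟩)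
    exacts [(h A).isOpen, (h A).compl.isOpen]

lemma exists_isGreatest_of_bddAbove_fst {I : Set (ℕ ×ₗ ℕ)} (hI : I.Nonempty)
    (hfst : BddAbove ((fun p => (ofLex p).1) '' I))
    (hrow : ∀ k, BddAbove {m | toLex (k, m) ∈ I}) : ∃ p, IsGreatest I p := by
  obtain ⟨p₀, hp₀, hk⟩ := Nat.sSup_mem (hI.image _) hfst
  set k := sSup ((fun p => (ofLex p).1) '' I)
  have hrow_ne : {m | toLex (k, m) ∈ I}.Nonempty := ⟨(ofLex p₀).2, by simpa [← hk]⟩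
  refine ⟨toLex (k, sSup {m | toLex (k, m) ∈ I}), Nat.sSup_mem hrow_ne (hrow k), fun p hp => ?_⟩
  rw [Prod.Lex.le_iff]
  rcases (le_csSup hfst (mem_image_of_mem _ hp)).lt_or_eq with hlt | heq
  · exact .inl hlt
  · refine .inr ⟨heq, le_csSup (hrow k) ?_⟩
    rw [show k = (ofLex p).1 from heq.symm]
    exact hp

lemma biUnion_Iic_eq_univ_of_not_bddAbove_fst {I : Set (ℕ ×ₗ ℕ)}
    (h : ¬ BddAbove ((fun p => (ofLex p).1) '' I)) : ⋃ p ∈ I, Iic p = univ := by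
  refine eq_univ_of_forall fun q => ?_
  obtain ⟨_, ⟨p, hp, rfl⟩, hlt⟩ := not_bddAbove_iff.1 h (ofLex q).1
  exact mem_biUnion hp (Prod.Lex.le_iff.2 (.inl hlt))

lemma iUnion_Iic_toLex (k : ℕ) : ⋃ n, Iic (toLex (k, n)) = {q : ℕ ×ₗ ℕ | (ofLex q).1 ≤ k} := by
  ext q
  simp only [mem_iUnion, mem_Iic, Prod.Lex.le_iff, mem_ofPred_eq, ofLex_toLex]
  constructor
  · rintro ⟨n, hlt | ⟨heq, -⟩⟩ <;> omega
  · intro h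
    exact ⟨(ofLex q).2, h.lt_or_eq.imp id fun heq => ⟨heq, le_rfl⟩⟩

lemma Iic_ne_setOf_fst_le (p : ℕ ×ₗ ℕ) (k : ℕ) : Iic p ≠ {q | (ofLex q).1 ≤ k} := by
  intro h
  have hp : p ∈ {q : ℕ ×ₗ ℕ | (ofLex q).1 ≤ k} := h ▸ mem_Iic.2 le_rfl
  have hq : toLex (k, (ofLex p).2 + 1) ∈ Iic p := by
    rw [h]
    exact le_refl k
  rw [mem_ofPred_eq] at hp
  rw [mem_Iic, Prod.Lex.le_iff, ofLex_toLex] at hq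
  omega

section ChainFamily

variable {X : Type*} {e : ℕ ×ₗ ℕ → X}

def admissible (x : ℕ → ℕ → Bool) : Set (ℕ ×ₗ ℕ) :=
  {p | ∀ m < (ofLex p).2, x (ofLex p).1 m = false}

def chainFamily (e : ℕ ×ₗ ℕ → X) (x : ℕ → ℕ → Bool) : Set (Set X) :=
  insert ∅ <| insert univ <| insert (range e) <| (fun p => e '' Iic p) '' admissible x

lemma injective_image_Iic (he : Function.Injective e) :
    Function.Injective fun p : ℕ ×ₗ ℕ => e '' Iic p :=
  he.image_injective.comp Iic_injective

lemma isChain_chainFamily (x : ℕ → ℕ → Bool) : IsChain (· ⊆ ·) (chainFamily e x) := by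
  have hmono : Monotone fun p => e '' Iic p := fun _ _ h => image_mono (Iic_subset_Iic.2 h)
  refine (((hmono.isChain_image (isChain_of_trichotomous _)).insert ?_).insert ?_).insert ?_
  · rintro _ ⟨p, -, rfl⟩ -
    exact .inr (image_subset_range _ _)
  · exact fun _ _ _ => .inr (subset_univ _)
  · exact fun _ _ _ => .inl (empty_subset _)

lemma sUnion_eq_of_subset_chainFamily {x : ℕ → ℕ → Bool} {S : Set (Set X)}
    (hS : S ⊆ chainFamily e x) (hU : univ ∉ S) (hR : range e ∉ S) :
    ⋃₀ S = e '' ⋃ p ∈ {p ∈ admissible x | e '' Iic p ∈ S}, Iic p := by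
  rw [image_iUnion₂]
  refine subset_antisymm (sUnion_subset fun s hs => ?_)
    (iUnion₂_subset fun p hp => subset_sUnion_of_mem hp.2)
  rcases hS hs with rfl | rfl | rfl | ⟨p, hp, rfl⟩
  · exact empty_subset _
  · exact absurd hs hU
  · exact absurd hs hR
  · exact subset_biUnion_of_mem (u := fun p => e '' Iic p) ⟨hp, hs⟩

lemma sUnion_mem_chainFamily {x : ℕ → ℕ → Bool} (hx : ∀ k, ∃ m, x k m = true)
    {S : Set (Set X)} (hS : S ⊆ chainFamily e x) : ⋃₀ S ∈ chainFamily e x := by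
  by_cases hU : univ ∈ S
  · rw [eq_univ_of_univ_subset (subset_sUnion_of_mem hU)]
    exact mem_insert_of_mem _ (mem_insert _ _)
  have hsub : ∀ s ∈ S, s ⊆ range e := fun s hs => by
    rcases hS hs with rfl | rfl | rfl | ⟨p, -, rfl⟩
    exacts [empty_subset _, absurd hs hU, subset_rfl, image_subset_range _ _]
  by_cases hR : range e ∈ S
  · rw [(sUnion_subset hsub).antisymm (subset_sUnion_of_mem hR)]
    exact mem_insert_of_mem _ (mem_insert_of_mem _ (mem_insert _ _))
  rw [sUnion_eq_of_subset_chainFamily hS hU hR]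
  set I := {p ∈ admissible x | e '' Iic p ∈ S}
  have hrow : ∀ k, BddAbove {m | toLex (k, m) ∈ I} := fun k => by
    obtain ⟨m₀, hm₀⟩ := hx k
    exact ⟨m₀, fun n hn => not_lt.1 fun hlt => Bool.false_ne_true ((hn.1 m₀ hlt).symm.trans hm₀)⟩
  rcases I.eq_empty_or_nonempty with hI | hI
  · rw [hI, biUnion_empty, image_empty]
    exact mem_insert _ _
  by_cases hfst : BddAbove ((fun p => (ofLex p).1) '' I)
  · obtain ⟨p, hp⟩ := exists_isGreatest_of_bddAbove_fst hI hfst hrow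
    rw [hp.isLUB.biUnion_Iic_eq_Iic hp.1]
    exact mem_insert_of_mem _ <| mem_insert_of_mem _ <| mem_insert_of_mem _ <|
      mem_image_of_mem _ hp.1.1
  · rw [biUnion_Iic_eq_univ_of_not_bddAbove_fst hfst, image_univ]
    exact mem_insert_of_mem _ (mem_insert_of_mem _ (mem_insert _ _))

lemma image_setOf_fst_le_notMem_chainFamily (he : Function.Injective e) (x : ℕ → ℕ → Bool)
    (k : ℕ) : e '' {q | (ofLex q).1 ≤ k} ∉ chainFamily e x := by
  have hout : e (toLex (k + 1, 0)) ∉ e '' {q | (ofLex q).1 ≤ k} := by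
    rw [he.mem_set_image]
    simp
  rintro (h | h | h | ⟨p, -, h⟩)
  · exact (image_nonempty.2 ⟨toLex (k, 0), le_refl k⟩).ne_empty h
  · exact hout (h ▸ mem_univ _)
  · exact hout (h ▸ mem_range_self _)
  · exact Iic_ne_setOf_fst_le p k (he.image_injective h)

lemma forall_exists_eq_true_of_isTopologyOn_chainFamily (he : Function.Injective e)
    {x : ℕ → ℕ → Bool} (h : IsTopologyOn (chainFamily e x)) : ∀ k, ∃ m, x k m = true := by
  by_contra! ⟨k, hk⟩
  have hsub : range (fun n => e '' Iic (toLex (k, n))) ⊆ chainFamily e x :=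
    range_subset_iff.2 fun n => mem_insert_of_mem _ <| mem_insert_of_mem _ <|
      mem_insert_of_mem _ <| mem_image_of_mem _ fun m _ => by simpa using hk m
  have hunion := h.2.2.2 _ hsub
  rw [sUnion_range, ← image_iUnion, iUnion_Iic_toLex] at hunion
  exact image_setOf_fst_le_notMem_chainFamily he x k hunion

theorem isTopologyOn_chainFamily_iff (he : Function.Injective e) (x : ℕ → ℕ → Bool) :
    IsTopologyOn (chainFamily e x) ↔ ∀ k, ∃ m, x k m = true := by
  refine ⟨forall_exists_eq_true_of_isTopologyOn_chainFamily he, fun hx => ?_⟩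
  refine ⟨mem_insert _ _, mem_insert_of_mem _ (mem_insert _ _), fun a ha b hb => ?_,
    fun S hS => sUnion_mem_chainFamily hx hS⟩
  rcases (isChain_chainFamily x).total ha hb with hab | hba
  · rwa [inter_eq_left.2 hab]
  · rwa [inter_eq_right.2 hba]

lemma isClopen_setOf_mem_admissible (p : ℕ ×ₗ ℕ) :
    IsClopen {x : ℕ → ℕ → Bool | p ∈ admissible x} := by
  have : {x : ℕ → ℕ → Bool | p ∈ admissible x} =
      ⋂ m ∈ Finset.range (ofLex p).2, {x | x (ofLex p).1 m = false} := by
    ext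
    simp [admissible]
  rw [this]
  exact isClopen_biInter_finset fun m _ =>
    (isClopen_discrete {false}).preimage (continuous_apply_apply (ρ := fun _ _ => Bool) _ m)

theorem continuous_chainFamily (he : Function.Injective e) :
    Continuous[_, cantorTop X] (chainFamily e) := by
  refine continuous_cantorTop_iff.2 fun A => ?_
  have hconst : IsClopen {_x : ℕ → ℕ → Bool | A = ∅ ∨ A = univ ∨ A = range e} :=
    ⟨isClosed_const, isOpen_const⟩
  have hsplit : {x | A ∈ chainFamily e x} = {_x | A = ∅ ∨ A = univ ∨ A = range e} ∪
      {x | A ∈ (fun p => e '' Iic p) '' admissible x} := by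
    ext
    simp only [chainFamily, mem_insert_iff, mem_union, mem_ofPred_eq, or_assoc]
  rw [hsplit]
  refine hconst.union ?_
  rcases em (A ∈ range fun p => e '' Iic p) with ⟨p, rfl⟩ | hA
  · simp only [(injective_image_Iic he).mem_set_image]
    exact isClopen_setOf_mem_admissible p
  · have hempty : {x | A ∈ (fun p => e '' Iic p) '' admissible x} = ∅ :=
      eq_empty_of_forall_notMem fun _ hx => hA (image_subset_range _ _ hx)
    rw [hempty]
    exact isClopen_empty

end ChainFamily

theorem stmt9 {X : Type*} [Infinite X] :
    ¬ ∃ C : ℕ → Set (Set (Set X)), (∀ n, IsClosed[cantorTop X] (C n)) ∧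
      {τ : Set (Set X) | IsTopologyOn τ} = ⋃ n, C n := by
  rintro ⟨C, hC, hTop⟩
  let _ : TopologicalSpace (Set (Set X)) := cantorTop X
  let e : ℕ ×ₗ ℕ ↪ X := (ofLex.trans Nat.pairEquiv).toEmbedding.trans (Infinite.natEmbedding X)
  refine setOf_forall_exists_eq_true_ne_iUnion_isClosed
    (fun n => (hC n).preimage (continuous_chainFamily e.injective)) ?_
  rw [← preimage_iUnion, ← hTop]
  ext x
  exact (isTopologyOn_chainFamily_iff e.injective x).symm
end

section
/- Let X be a set and let T be an infinite collection of topologies on X, each strictly finer than the trivial topology I = {∅, X}, which are pairwise disjoint in the sense that σ ∩ ρ = I for all distinct σ, ρ ∈ T. Then the topological closure of T in 2^{P(X)} equals T ∪ {I}, and this subspace is the one-point compactification of the discrete space T: the map from OnePoint(T) (T taken with the discrete topology) to the subspace T ∪ {I} sending each τ ∈ T to itself and the point at infinity to I is a homeomorphism. -/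
open scoped Topology

/-- The one-point compactification of the type `D` taken with the discrete topology. -/
def onePointDiscreteTop (D : Type*) : TopologicalSpace (OnePoint D) :=
  letI : TopologicalSpace D := ⊥
  inferInstance

/-!
Write `I = {∅, X}`. Every `τ ∈ T` contains `I`, and by disjointness a set `A ∉ I` lies in at most
one member of `T`. So each subbasic neighbourhood `A⁺` (`A ∈ I`) or `A⁻` (`A ∉ I`) of `I`
contains all but at most one point of `T`: `T` converges to `I` along the cofinite filter.
Conversely, a point `x` of the closure contains `I` (the sets `A⁺` are clopen), and if `x ≠ I` it
contains some `A ∉ I`; then `x` lies in the closure of the at most one-point set `T ∩ A⁺`, hence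
in `T`. Finally, `OnePoint T → T ∪ {I}` is a continuous bijection from a compact space onto a
Hausdorff one.
-/

open Set Filter Function Topology

namespace cantorTop

attribute [local instance] cantorTop

variable {X : Type*}

theorem isOpen_setOf_mem (A : Set X) : IsOpen {x : Set (Set X) | A ∈ x} :=
  .basic _ (.inl ⟨A, rfl⟩)

theorem isOpen_setOf_notMem (A : Set X) : IsOpen {x : Set (Set X) | A ∉ x} :=
  .basic _ (.inr ⟨A, rfl⟩)

theorem isClosed_setOf_mem (A : Set X) : IsClosed {x : Set (Set X) | A ∈ x} :=
  ⟨isOpen_setOf_notMem A⟩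

theorem isClosed_setOf_superset (I : Set (Set X)) : IsClosed {x : Set (Set X) | I ⊆ x} := by
  have : {x : Set (Set X) | I ⊆ x} = ⋂ A ∈ I, {x | A ∈ x} := by ext; simp [subset_def]
  exact this ▸ isClosed_biInter fun A _ => isClosed_setOf_mem A

theorem t2Space : T2Space (Set (Set X)) := by
  refine ⟨fun x y hxy => ?_⟩
  obtain ⟨A, hA⟩ : ∃ A, ¬(A ∈ x ↔ A ∈ y) := by
    by_contra! h
    exact hxy (ext h)
  by_cases hAx : A ∈ x
  · exact ⟨_, _, isOpen_setOf_mem A, isOpen_setOf_notMem A, hAx, by tauto,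
      disjoint_left.2 fun _ h h' => h' h⟩
  · exact ⟨_, _, isOpen_setOf_notMem A, isOpen_setOf_mem A, hAx, by tauto,
      disjoint_left.2 fun _ h h' => h h'⟩

attribute [local instance] t2Space

variable {I : Set (Set X)} {T : Set (Set (Set X))}

theorem subsingleton_inter_setOf_mem (hdisj : T.Pairwise fun σ ρ => σ ∩ ρ ⊆ I) {A : Set X}
    (hA : A ∉ I) : (T ∩ {x | A ∈ x}).Subsingleton :=
  fun _ hσ _ hρ => hdisj.eq hσ.1 hρ.1 fun h => hA (h ⟨hσ.2, hρ.2⟩)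

theorem tendsto_cofinite_nhds (hsub : ∀ τ ∈ T, I ⊆ τ)
    (hdisj : T.Pairwise fun σ ρ => σ ∩ ρ ⊆ I) :
    Tendsto (Subtype.val : T → Set (Set X)) cofinite (𝓝 I) := by
  refine TopologicalSpace.tendsto_nhds_generateFrom_iff.2 ?_
  rintro _ (⟨A, rfl⟩ | ⟨A, rfl⟩) hIA
  · exact univ_mem' fun τ => hsub τ τ.2 hIA
  · have hsing := subsingleton_inter_setOf_mem hdisj hIA
    exact mem_cofinite.2 <| (hsing.preimage Subtype.val_injective).finite.subset
      fun τ hτ => ⟨τ.2, not_not.1 hτ⟩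

theorem closure_eq_union_singleton (hT : T.Infinite) (hsub : ∀ τ ∈ T, I ⊆ τ)
    (hdisj : T.Pairwise fun σ ρ => σ ∩ ρ ⊆ I) : closure T = T ∪ {I} := by
  refine subset_antisymm (fun x hx => ?_) (union_subset subset_closure ?_)
  · have hIx : I ⊆ x := (isClosed_setOf_superset I).closure_subset_iff.2 hsub hx
    by_cases hxI : x ⊆ I
    · exact Or.inr (hxI.antisymm hIx)
    obtain ⟨A, hAx, hAI⟩ := not_subset.1 hxI
    have hx' := (isOpen_setOf_mem A).inter_closure ⟨hAx, hx⟩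
    rw [inter_comm, (subsingleton_inter_setOf_mem hdisj hAI).closure_eq] at hx'
    exact Or.inl hx'.1
  · have := hT.to_subtype
    exact singleton_subset_iff.2 <|
      mem_closure_of_tendsto (tendsto_cofinite_nhds hsub hdisj) (.of_forall fun τ => τ.2)

end cantorTop

theorem exists_homeomorph_onePoint_of_tendsto {Y : Type*} [TopologicalSpace Y] [T2Space Y]
    {T : Set Y} {y : Y} (hy : y ∉ T) (h : Tendsto (Subtype.val : T → Y) cofinite (𝓝 y)) :
    ∃ f : @Homeomorph (OnePoint T) ↥(T ∪ {y}) (onePointDiscreteTop T) _,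
      (∀ τ : T, (f τ : Y) = τ) ∧ (f OnePoint.infty : Y) = y := by
  let _ : TopologicalSpace T := ⊥
  have : DiscreteTopology T := ⟨rfl⟩
  let g : OnePoint T → ↥(T ∪ {y}) := fun p => p.elim ⟨y, .inr rfl⟩ fun τ => ⟨τ, .inl τ.2⟩
  have hg : Bijective g := by
    refine ⟨?_, ?_⟩
    · rintro (_ | σ) (_ | ρ) h <;> have h' := congrArg Subtype.val h
      · rfl
      · exact absurd ρ.2 (h' ▸ hy)
      · exact absurd σ.2 (h' ▸ hy)
      · exact congrArg _ (Subtype.ext h' : σ = ρ)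
    · rintro ⟨x, hx | rfl⟩
      exacts [⟨(⟨x, hx⟩ : T), rfl⟩, ⟨OnePoint.infty, rfl⟩]
  have hcont : Continuous g := (OnePoint.continuous_iff_from_discrete g).2 (tendsto_subtype_rng.2 h)
  let e := hcont.homeoOfEquivCompactToT2 (f := .ofBijective g hg)
  exact ⟨e, fun _ => rfl, rfl⟩

theorem stmt13 {X : Type*} (T : Set (Set (Set X))) (hT : T.Infinite)
    (htop : ∀ τ ∈ T, IsTopologyOn τ ∧ ({∅, Set.univ} : Set (Set X)) ⊂ τ)
    (hdisj : ∀ σ ∈ T, ∀ ρ ∈ T, σ ≠ ρ → σ ∩ ρ = ({∅, Set.univ} : Set (Set X))) :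
    @closure _ (cantorTop X) T = T ∪ {{∅, Set.univ}} ∧
    ∃ f : @Homeomorph (OnePoint ↥T) ↥(T ∪ {{∅, Set.univ}})
        (onePointDiscreteTop ↥T)
        (TopologicalSpace.induced Subtype.val (cantorTop X)),
      (∀ τ : ↥T, ((f (↑τ : OnePoint ↥T) : ↥(T ∪ {{∅, Set.univ}})) : Set (Set X)) = ↑τ) ∧
      ((f OnePoint.infty : ↥(T ∪ {{∅, Set.univ}})) : Set (Set X)) = {∅, Set.univ} := by
  let _ := cantorTop X
  have := cantorTop.t2Space (X := X)
  have hsub : ∀ τ ∈ T, {∅, univ} ⊆ τ := fun τ hτ => (htop τ hτ).2.1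
  have hInotT : {∅, univ} ∉ T := fun h => (htop _ h).2.ne rfl
  have hpair : T.Pairwise fun σ ρ => σ ∩ ρ ⊆ {∅, univ} :=
    fun σ hσ ρ hρ hne => (hdisj σ hσ ρ hρ hne).subset
  exact ⟨cantorTop.closure_eq_union_singleton hT hsub hpair,
    exists_homeomorph_onePoint_of_tendsto hInotT (cantorTop.tendsto_cofinite_nhds hsub hpair)⟩
end

section
/- Let Ult(ℕ) = ⋃_{n∈ℕ} TYPE[n] be the set of all ultratopologies on ℕ, viewed as a subset of 2^{P(ℕ)}. Then Ult(ℕ) is an F_σ subset of 2^{P(ℕ)} (a countable union of closed sets), but Ult(ℕ) is not compact in the subspace topology. -/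
/-- `TYPE[n]`: the set of ultratopologies on `ℕ` associated with the point `n`, i.e. the
families of the form `𝒫(ℕ \ {n}) ∪ F` where `F` is an ultrafilter on `ℕ` with `{n} ∉ F`. -/
def TYPEb (n : ℕ) : Set (Set (Set ℕ)) :=
  {T | ∃ F : Ultrafilter ℕ, ({n} : Set ℕ) ∉ F ∧
    T = {A : Set ℕ | A ⊆ ({n} : Set ℕ)ᶜ} ∪ {A : Set ℕ | A ∈ F}}

open scoped Topology

/-!
`TYPE[n]` is the image of `{F | {n} ∉ F}`, a closed and hence compact subset of the Stone–Čech
compactification `Ultrafilter ℕ`, under `F ↦ 𝒫(ℕ ∖ {n}) ∪ F`. This map is continuous into the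
Cantor cube because each `{F | A ∈ 𝒫(ℕ ∖ {n}) ∪ F}` is either everything or the clopen `{F | A ∈ F}`;
as the cube is Hausdorff, `TYPE[n]` is closed.

Every member of `TYPE[m]` contains all singletons `{i}` with `i ≠ m` but not `{m}`, so the open sets
`{x | {i} ∉ x}` cover `Ult(ℕ)` while no finitely many of them do.
-/

section CantorCube

variable {X Y : Type*}

theorem isOpen_cantorTop_mem (A : Set X) : IsOpen[cantorTop X] {x : Set (Set X) | A ∈ x} :=
  TopologicalSpace.GenerateOpen.basic _ (Or.inl ⟨A, rfl⟩)

theorem isOpen_cantorTop_notMem (A : Set X) : IsOpen[cantorTop X] {x : Set (Set X) | A ∉ x} :=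
  TopologicalSpace.GenerateOpen.basic _ (Or.inr ⟨A, rfl⟩)

theorem t2Space_cantorTop : @T2Space (Set (Set X)) (cantorTop X) := by
  let := cantorTop X
  refine ⟨fun x y hxy => ?_⟩
  obtain ⟨A, hA⟩ : ∃ A, ¬(A ∈ x ↔ A ∈ y) := by
    by_contra! h
    exact hxy (Set.ext h)
  by_cases hAx : A ∈ x
  · exact ⟨_, _, isOpen_cantorTop_mem A, isOpen_cantorTop_notMem A, hAx, by tauto,
      Set.disjoint_left.2 fun _ h h' => h' h⟩
  · exact ⟨_, _, isOpen_cantorTop_notMem A, isOpen_cantorTop_mem A, hAx, by tauto,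
      Set.disjoint_left.2 fun _ h h' => h h'⟩

theorem continuous_cantorTop_of_isClopen [TopologicalSpace Y] {g : Y → Set (Set X)}
    (hg : ∀ A, IsClopen {y | A ∈ g y}) : Continuous[_, cantorTop X] g := by
  refine continuous_generateFrom_iff.2 ?_
  rintro s (⟨A, rfl⟩ | ⟨A, rfl⟩)
  · exact (hg A).isOpen
  · exact (hg A).compl.isOpen

end CantorCube

section Ultratopology

variable {X : Type*}

def ultratopology (x : X) (F : Ultrafilter X) : Set (Set X) :=
  {A | A ⊆ {x}ᶜ} ∪ {A | A ∈ F}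

theorem singleton_mem_ultratopology {x y : X} (hyx : y ≠ x) (F : Ultrafilter X) :
    {y} ∈ ultratopology x F :=
  Or.inl (Set.singleton_subset_iff.2 hyx)

theorem singleton_notMem_ultratopology {x : X} {F : Ultrafilter X} (hF : {x} ∉ F) :
    {x} ∉ ultratopology x F := by
  rintro (h | h)
  · exact h rfl rfl
  · exact hF h

theorem continuous_ultratopology (x : X) : Continuous[_, cantorTop X] (ultratopology x) := by
  refine continuous_cantorTop_of_isClopen fun A => ?_
  by_cases hA : A ⊆ {x}ᶜ
  · have huniv : {F | A ∈ ultratopology x F} = Set.univ := Set.eq_univ_of_forall fun _ => Or.inl hA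
    exact huniv ▸ isClopen_univ
  · have hbasic : {F | A ∈ ultratopology x F} = {F | A ∈ F} := by
      ext F
      exact or_iff_right hA
    exact hbasic ▸ ⟨ultrafilter_isClosed_basic A, ultrafilter_isOpen_basic A⟩

theorem isClosed_image_ultratopology (x : X) :
    IsClosed[cantorTop X] (ultratopology x '' {F | {x} ∉ F}) := by
  let := cantorTop X
  have := t2Space_cantorTop (X := X)
  have hcompact : IsCompact {F : Ultrafilter X | {x} ∉ F} :=
    (ultrafilter_isOpen_basic {x}).isClosed_compl.isCompact
  exact (hcompact.image (continuous_ultratopology x)).isClosed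

end Ultratopology

theorem TYPEb_eq_image_ultratopology (n : ℕ) : TYPEb n = ultratopology n '' {F | {n} ∉ F} := by
  ext T
  simp only [TYPEb, ultratopology, Set.mem_image, Set.mem_ofPred_eq, eq_comm]

/-- `Ult(ℕ) = ⋃ₙ TYPE[n]` is an `F_σ` subset of `2^{𝒫(ℕ)}` but is not compact. -/
theorem stmt18 :
    (∃ C : ℕ → Set (Set (Set ℕ)), (∀ n, IsClosed[cantorTop ℕ] (C n)) ∧
      (⋃ n, TYPEb n) = ⋃ n, C n) ∧
    ¬ @IsCompact _ (cantorTop ℕ) (⋃ n, TYPEb n) := by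
  let := cantorTop ℕ
  refine ⟨⟨TYPEb, fun n => ?_, rfl⟩, fun hcompact => ?_⟩
  · rw [TYPEb_eq_image_ultratopology]
    exact isClosed_image_ultratopology n
  have hcover : (⋃ n, TYPEb n) ⊆ ⋃ i : ℕ, {x : Set (Set ℕ) | {i} ∉ x} := by
    rintro _ ⟨_, ⟨n, rfl⟩, F, hF, rfl⟩
    exact Set.mem_iUnion.2 ⟨n, singleton_notMem_ultratopology hF⟩
  obtain ⟨t, ht⟩ := hcompact.elim_finite_subcover _ (fun i => isOpen_cantorTop_notMem {i}) hcover
  obtain ⟨m, hm⟩ := Infinite.exists_notMem_finset t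
  have hpure : ({m} : Set ℕ) ∉ (pure (m + 1) : Ultrafilter ℕ) := by simp
  obtain ⟨i, hi, hT⟩ := Set.mem_iUnion₂.1 (ht (Set.mem_iUnion.2 ⟨m, pure (m + 1), hpure, rfl⟩))
  exact hT (singleton_mem_ultratopology (ne_of_mem_of_not_mem hi hm) _)
end
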